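/- arXiv:2209.01306 — 2 statements merged into one kernel-verified Lean document; each statement's English description precedes it below -/
import Mathlib

section
/- For a nonzero ω ∈ ℝⁿ, the closure of the image of the line ℝω in ℝⁿ/ℤⁿ equals the image of a k-dimensional rational linear subspace V of ℝⁿ containing ω, where k = dim_ℚ (ℚω₁ + ⋯ + ℚωₙ); moreover V ∩ ℤⁿ is a lattice of rank k in V and the closure equals π(V). -/
/-!
Write each `ωᵢ` in a `ℚ`-basis of `ℚω₁ + ⋯ + ℚωₙ`; clearing denominators gives `k` integer
vectors whose real span `V` contains `ω`. Since `V` is spanned by integer vectors, `V ∩ ℤⁿ` is a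
lattice in `V`; writing `ω = ∑ αⱼ bⱼ` in one of its bases, every `ωᵢ` is an integer combination of
the `αⱼ`, which forces `dim V = k` and the `αⱼ` to be rationally independent.

By Kronecker's theorem `ℝα + ℤᵏ` is then dense in `ℝᵏ`, so the image of the line is dense in
`π(V)`, which is compact as the image of a fundamental domain. Kronecker's theorem itself comes
from the fact that a proper closed subgroup of `ℝᵏ` lies in `φ⁻¹(ℤ)` for a nonzero linear form `φ`:
here `φ` would vanish on `α` and take integer values `cᵢ` on the basis vectors, giving the
relation `∑ cᵢ αᵢ = 0`.
-/
open Submodule Module Set Filter Topology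

section ClosedSubgroup

variable {E : Type*} [NormedAddCommGroup E] [NormedSpace ℝ E]

lemma norm_floor_div_norm_zsmul_sub_le (g : E) (t : ℝ) :
    ‖⌊t / ‖g‖⌋ • g - t • (‖g‖⁻¹ • g)‖ ≤ ‖g‖ := by
  rcases eq_or_ne g 0 with rfl | hg
  · simp
  have hg' : ‖g‖ ≠ 0 := norm_ne_zero_iff.2 hg
  have : ⌊t / ‖g‖⌋ • g - t • (‖g‖⁻¹ • g) = (⌊t / ‖g‖⌋ - t / ‖g‖) • g := by
    rw [smul_smul, sub_smul, ← div_eq_mul_inv, Int.cast_smul_eq_zsmul]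
  rw [this, norm_smul, Real.norm_eq_abs, abs_sub_comm, Int.self_sub_floor,
    abs_of_nonneg (Int.fract_nonneg _)]
  exact mul_le_of_le_one_left (norm_nonneg _) (Int.fract_lt_one _).le

/-- The limit direction of a sequence of nonzero elements of `G` tending to `0` spans a line
inside `G`. -/
theorem AddSubgroup.exists_smul_mem_of_not_discreteTopology [ProperSpace E] {G : AddSubgroup E}
    (hG : IsClosed (G : Set E)) (hdisc : ¬ DiscreteTopology G) :
    ∃ u : E, u ≠ 0 ∧ ∀ t : ℝ, t • u ∈ G := by
  have hsmall : ∀ ε > 0, ∃ g ∈ G, g ≠ 0 ∧ ‖g‖ < ε := by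
    simpa [discreteTopology_iff_isOpen_singleton_zero, Metric.isOpen_singleton_iff,
      dist_eq_norm, and_comm] using hdisc
  choose g hgG hg0 hgε using fun m : ℕ => hsmall (1 / (m + 1)) Nat.one_div_pos_of_nat
  have hg_lim : Tendsto g atTop (𝓝 0) :=
    squeeze_zero_norm (fun m => (hgε m).le) tendsto_one_div_add_atTop_nhds_zero_nat
  obtain ⟨u, hu, φ, hφ, hu_lim⟩ := (isCompact_sphere (0 : E) 1).tendsto_subseq
    (x := fun m => ‖g m‖⁻¹ • g m) fun m => by simp [norm_smul, hg0 m]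
  refine ⟨u, by rintro rfl; simp at hu, fun t => ?_⟩
  have hfloor : Tendsto (fun m => ⌊t / ‖g (φ m)‖⌋ • g (φ m) - t • (‖g (φ m)‖⁻¹ • g (φ m)))
      atTop (𝓝 0) :=
    squeeze_zero_norm (fun m => norm_floor_div_norm_zsmul_sub_le _ t)
      (tendsto_norm_zero.comp (hg_lim.comp hφ.tendsto_atTop))
  refine hG.mem_of_tendsto (by simpa using hfloor.add (hu_lim.const_smul t))
    (Eventually.of_forall fun m => G.zsmul_mem (hgG (φ m)) _)

theorem AddSubgroup.exists_dual_int_of_discreteTopology [FiniteDimensional ℝ E] [Nontrivial E]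
    (G : AddSubgroup E) [DiscreteTopology G] :
    ∃ φ : Dual ℝ E, φ ≠ 0 ∧ ∀ g ∈ G, ∃ m : ℤ, φ g = m := by
  let L := G.toIntSubmodule
  have : DiscreteTopology L := ‹DiscreteTopology G›
  by_cases hspan : span ℝ (L : Set E) = ⊤
  · have : IsZLattice ℝ L := ⟨hspan⟩
    let b := (Free.chooseBasis ℤ L).ofZLatticeBasis ℝ L
    obtain ⟨i⟩ := b.index_nonempty
    refine ⟨b.coord i, fun h => by simpa using LinearMap.congr_fun h (b i), fun g hg => ?_⟩
    have hg : g ∈ span ℤ (range b) := by rwa [Basis.ofZLatticeBasis_span]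
    obtain ⟨m, hm⟩ := (b.mem_span_iff_repr_mem ℤ g).mp hg i
    exact ⟨m, hm.symm⟩
  · obtain ⟨φ, hφ, hφL⟩ := exists_dual_map_eq_bot_of_lt_top (lt_top_iff_ne_top.2 hspan)
      inferInstance
    refine ⟨φ, hφ, fun g hg => ⟨0, ?_⟩⟩
    have : φ g ∈ (span ℝ (L : Set E)).map φ := Submodule.mem_map_of_mem (subset_span hg)
    simpa [hφL] using this

theorem AddSubgroup.exists_dual_int_of_isClosed [FiniteDimensional ℝ E] {G : AddSubgroup E}
    (hG : IsClosed (G : Set E)) (hGE : G ≠ ⊤) :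
    ∃ φ : Dual ℝ E, φ ≠ 0 ∧ ∀ g ∈ G, ∃ m : ℤ, φ g = m := by
  induction hd : finrank ℝ E using Nat.strong_induction_on generalizing E with
  | _ d ih =>
  have : Nontrivial E := by
    by_contra h
    rw [not_nontrivial_iff_subsingleton] at h
    exact hGE (Subsingleton.elim _ _)
  by_cases hdisc : DiscreteTopology G
  · exact G.exists_dual_int_of_discreteTopology
  -- `G` contains a line `ℝ ∙ u`; use induction on a complement `W` of it.
  obtain ⟨u, hu, huG⟩ := G.exists_smul_mem_of_not_discreteTopology hG hdisc
  have hline : ∀ x ∈ ℝ ∙ u, x ∈ G := by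
    intro x hx
    obtain ⟨t, rfl⟩ := mem_span_singleton.1 hx
    exact huG t
  obtain ⟨W, hW⟩ := (ℝ ∙ u).exists_isCompl
  let P := W.projectionOnto (ℝ ∙ u) hW.symm
  have hPG (x : E) : (P x : E) ∈ G ↔ x ∈ G := by
    conv_rhs => rw [← projection_add_projection_eq_self hW.symm x]
    exact (G.add_mem_cancel_right (hline _ (projection_apply_mem _ _))).symm
  let H : AddSubgroup W := G.comap W.subtype.toAddMonoidHom
  have hH : IsClosed (H : Set W) := hG.preimage continuous_subtype_val
  have hHW : H ≠ ⊤ := fun htop =>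
    hGE (eq_top_iff.2 fun x _ => (hPG x).1 (show P x ∈ H from htop ▸ AddSubgroup.mem_top _))
  have hWE : W ≠ ⊤ := by
    rintro rfl
    exact hu (span_singleton_eq_bot.1 (eq_bot_of_isCompl_top hW))
  obtain ⟨ψ, hψ, hψH⟩ := ih _ (hd ▸ Submodule.finrank_lt hWE) hH hHW rfl
  refine ⟨ψ ∘ₗ P, fun h => hψ (LinearMap.ext fun x => ?_), fun g hg => hψH (P g) ((hPG g).2 hg)⟩
  simpa [P] using LinearMap.congr_fun h x

end ClosedSubgroup

lemma eq_zero_of_forall_mul_int {a : ℝ} (h : ∀ t : ℝ, ∃ m : ℤ, t * a = m) : a = 0 := by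
  by_contra ha
  obtain ⟨m, hm⟩ := h (2 * a)⁻¹
  have : ((2 * m : ℤ) : ℝ) = 1 := by
    push_cast
    rw [← hm]
    field_simp
  have : 2 * m = 1 := by exact_mod_cast this
  omega

abbrev integerLattice (ι : Type*) [Finite ι] : Submodule ℤ (ι → ℝ) :=
  span ℤ (range (Pi.basisFun ℝ ι))

lemma mem_integerLattice_iff {ι : Type*} [Finite ι] {v : ι → ℝ} :
    v ∈ integerLattice ι ↔ ∀ i, ∃ m : ℤ, v i = m := by
  simp [Basis.mem_span_iff_repr_mem, eq_comm]

/-- Kronecker's theorem. -/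
theorem dense_span_singleton_sup_integerLattice {ι : Type*} [Fintype ι] {α : ι → ℝ}
    (hα : LinearIndependent ℚ α) :
    Dense (((ℝ ∙ α).toAddSubgroup ⊔ (integerLattice ι).toAddSubgroup : AddSubgroup (ι → ℝ)) :
      Set (ι → ℝ)) := by
  set D : AddSubgroup (ι → ℝ) := (ℝ ∙ α).toAddSubgroup ⊔ (integerLattice ι).toAddSubgroup
  rw [dense_iff_closure_eq, ← D.topologicalClosure_coe, ← AddSubgroup.coe_top,
    SetLike.coe_set_eq]
  by_contra hne
  obtain ⟨φ, hφ, hφD⟩ := AddSubgroup.exists_dual_int_of_isClosed D.isClosed_topologicalClosure hne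
  have hint (x) (hx : x ∈ D) : ∃ m : ℤ, φ x = m := hφD x (D.le_topologicalClosure hx)
  have hφα : φ α = 0 := eq_zero_of_forall_mul_int fun t => by
    obtain ⟨m, hm⟩ :=
      hint (t • α) (AddSubgroup.mem_sup_left (smul_mem _ t (mem_span_singleton_self α)))
    exact ⟨m, by simpa using hm⟩
  choose c hc using fun i => hint _ (AddSubgroup.mem_sup_right (subset_span ⟨i, rfl⟩))
  have hrel : ∑ i, c i • α i = 0 := by
    have hφα' : φ α = ∑ i, α i * c i := by
      conv_lhs => rw [← (Pi.basisFun ℝ ι).sum_repr α]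
      simp [hc]
    simpa [zsmul_eq_mul, mul_comm, hφα] using hφα'.symm
  have hc0 := Fintype.linearIndependent_iff.1 (hα.restrict_scalars' ℤ) c hrel
  exact hφ ((Pi.basisFun ℝ ι).ext fun i => by simp [hc, hc0])

def torusProj (ι : Type*) : (ι → ℝ) →+ (ι → AddCircle (1 : ℝ)) :=
  (QuotientAddGroup.mk' _).compLeft ι

section Torus

variable {ι : Type*}

lemma continuous_torusProj : Continuous (torusProj ι) :=
  continuous_pi fun _ => (AddCircle.continuous_mk' 1).comp (continuous_apply _)

lemma torusProj_add_of_mem [Finite ι] (v : ι → ℝ) {w : ι → ℝ} (hw : w ∈ integerLattice ι) :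
    torusProj ι (v + w) = torusProj ι v := by
  rw [map_add, add_eq_left]
  funext i
  obtain ⟨m, hm⟩ := mem_integerLattice_iff.1 hw i
  exact (AddCircle.coe_eq_zero_iff 1).2 ⟨m, by simp [hm]⟩

theorem closure_range_torusProj_smul [Fintype ι] {J : Type*} [Fintype J] {b : J → ι → ℝ}
    (hb : ∀ j, b j ∈ integerLattice ι) {α : J → ℝ} (hα : LinearIndependent ℚ α) :
    closure (range fun t : ℝ => torusProj ι (t • ∑ j, α j • b j)) =
      torusProj ι '' span ℝ (range b) := by
  let Φ := Fintype.linearCombination ℝ b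
  let f := torusProj ι ∘ Φ
  have hf : Continuous f := continuous_torusProj.comp Φ.continuous_of_finiteDimensional
  have hΦ : integerLattice J ≤ (integerLattice ι).comap (Φ.restrictScalars ℤ) :=
    span_le.2 <| by
      classical
      rintro _ ⟨j, rfl⟩
      simpa [Φ, Fintype.linearCombination_apply_single] using hb j
  have hper (z w : J → ℝ) (hw : w ∈ integerLattice J) : f (z + w) = f z := by
    simp only [f, Function.comp_apply, map_add]
    exact torusProj_add_of_mem _ (hΦ hw)
  have hline (t : ℝ) : f (t • α) = torusProj ι (t • ∑ j, α j • b j) := by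
    simp [f, Φ, Fintype.linearCombination_apply]
  have hrange : range f = torusProj ι '' span ℝ (range b) := by
    rw [range_comp, ← Fintype.range_linearCombination]
    rfl
  rw [← hrange]
  apply subset_antisymm
  · exact closure_minimal (range_subset_iff.2 fun t => ⟨t • α, hline t⟩)
      (IsZLattice.isCompact_range_of_periodic _ f hf hper).isClosed
  · rintro _ ⟨x, rfl⟩
    have hx := dense_span_singleton_sup_integerLattice hα x
    refine closure_mono ?_ (image_closure_subset_closure_image hf ⟨x, hx, rfl⟩)
    rintro _ ⟨y, hy, rfl⟩
    obtain ⟨a, ha, z, hz, rfl⟩ := AddSubgroup.mem_sup.1 hy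
    obtain ⟨t, rfl⟩ := mem_span_singleton.1 ha
    exact ⟨t, by rw [hper _ _ hz, hline]⟩

end Torus

section RationalSubspace

variable {ι : Type*} [Fintype ι]

lemma span_rat_range_le_of_sum_smul_eq {J : Type*} [Fintype J] {b : J → ι → ℝ}
    (hb : ∀ j, b j ∈ integerLattice ι) {α : J → ℝ} {ω : ι → ℝ} (hω : ∑ j, α j • b j = ω) :
    span ℚ (range ω) ≤ span ℚ (range α) := by
  rw [span_le]
  rintro _ ⟨i, rfl⟩
  choose m hm using fun j => mem_integerLattice_iff.1 (hb j) i
  have : ω i = ∑ j, m j • α j := by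
    simp [← hω, Finset.sum_apply, hm, zsmul_eq_mul, mul_comm]
  rw [SetLike.mem_coe, this]
  exact sum_mem fun j _ => zsmul_mem (subset_span (mem_range_self j)) _

/-- The `m j` are the coordinates of the `ω i` in a `ℚ`-basis of `ℚ ω₁ + ⋯ + ℚ ωₙ`, with
denominators cleared. -/
theorem exists_integerLattice_mem_span (ω : ι → ℝ) :
    ∃ m : Fin (finrank ℚ (span ℚ (range ω))) → ι → ℝ,
      (∀ j, m j ∈ integerLattice ι) ∧ ω ∈ span ℝ (range m) := by
  have : FiniteDimensional ℚ (span ℚ (range ω)) := .span_of_finite ℚ (finite_range ω)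
  let τ := Module.finBasis ℚ (span ℚ (range ω))
  let q (x : Fin (finrank ℚ (span ℚ (range ω))) × ι) : ℚ :=
    τ.repr ⟨ω x.2, subset_span ⟨x.2, rfl⟩⟩ x.1
  obtain ⟨d, hd⟩ := IsLocalization.exist_integer_multiples_of_finite (nonZeroDivisors ℤ) q
  choose z hz using hd
  refine ⟨fun j i => z (j, i), fun j => mem_integerLattice_iff.2 fun i => ⟨_, rfl⟩, ?_⟩
  have hd0 : ((d : ℤ) : ℝ) ≠ 0 := by exact_mod_cast nonZeroDivisors.coe_ne_zero d
  have hzq (x) : (z x : ℝ) = d * q x := by exact_mod_cast congrArg (fun r : ℚ => (r : ℝ)) (hz x)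
  refine (mem_span_range_iff_exists_fun ℝ).2 ⟨fun j => (τ j : ℝ) / d, ?_⟩
  funext i
  have h := congrArg Subtype.val (τ.sum_repr ⟨ω i, subset_span ⟨i, rfl⟩⟩)
  simp only [coe_sum, SetLike.val_smul, Rat.smul_def] at h
  rw [← h]
  simp only [Finset.sum_apply, Pi.smul_apply, smul_eq_mul, hzq, q]
  exact Finset.sum_congr rfl fun j _ => by field_simp

theorem exists_integral_basis_span {J : Type*} [Fintype J] {s : Set (ι → ℝ)}
    (hs : s ⊆ integerLattice ι) (hJ : Fintype.card J = finrank ℝ (span ℝ s)) :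
    ∃ b : J → ι → ℝ, (∀ j, b j ∈ integerLattice ι) ∧ LinearIndependent ℝ b ∧
      span ℝ (range b) = span ℝ s ∧
      span ℤ (range b) = (span ℝ s).restrictScalars ℤ ⊓ integerLattice ι := by
  set V := span ℝ s
  let L : Submodule ℤ V := (integerLattice ι).comap (V.subtype.restrictScalars ℤ)
  have : DiscreteTopology L :=
    ZLattice.comap_discreteTopology ℝ _ continuous_subtype_val Subtype.val_injective
  have : IsZLattice ℝ L :=
    ⟨eq_top_iff.2 <| span_span_coe_preimage.ge.trans (span_mono fun x hx => hs hx)⟩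
  let B := ((finBasisOfFinrankEq ℤ L (ZLattice.rank ℝ L)).reindex
    (Fintype.equivFinOfCardEq hJ).symm).ofZLatticeBasis ℝ L
  have hrange : range (fun j => (B j : ι → ℝ)) = V.subtype '' range B := by
    rw [← range_comp]
    rfl
  have hspanZ : span ℤ (range fun j => (B j : ι → ℝ)) = V.restrictScalars ℤ ⊓ integerLattice ι := by
    rw [hrange, show (V.subtype '' range B) = (V.subtype.restrictScalars ℤ) '' range B from rfl,
      ← map_span, Basis.ofZLatticeBasis_span, map_comap_eq, LinearMap.range_restrictScalars,
      range_subtype]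
  refine ⟨fun j => B j, fun j => ?_, B.linearIndependent.map' V.subtype V.ker_subtype, ?_, hspanZ⟩
  · exact (mem_inf.1 (hspanZ.le (subset_span (mem_range_self j)))).2
  · rw [hrange, ← map_span, B.span_eq, Submodule.map_top, range_subtype]

theorem finrank_span_rat_le_finrank_span {ω : ι → ℝ} {s : Set (ι → ℝ)}
    (hs : s ⊆ integerLattice ι) (hω : ω ∈ span ℝ s) :
    finrank ℚ (span ℚ (range ω)) ≤ finrank ℝ (span ℝ s) := by
  obtain ⟨b, hb, -, hbs, -⟩ := exists_integral_basis_span hs (Fintype.card_fin _)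
  rw [← hbs] at hω
  obtain ⟨α, hα⟩ := (mem_span_range_iff_exists_fun ℝ).1 hω
  have : FiniteDimensional ℚ (span ℚ (range α)) := .span_of_finite ℚ (finite_range α)
  have := (finrank_mono (span_rat_range_le_of_sum_smul_eq hb hα)).trans (finrank_range_le_card α)
  rwa [Fintype.card_fin] at this

end RationalSubspace

theorem closure_line_in_n_torus_general (n : ℕ) (ω : Fin n → ℝ) :
    ∃ b : Fin (Module.finrank ℚ (Submodule.span ℚ (Set.range ω))) → (Fin n → ℝ),
      (∀ j i, ∃ m : ℤ, b j i = (m : ℝ)) ∧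
      LinearIndependent ℝ b ∧
      ω ∈ Submodule.span ℝ (Set.range b) ∧
      {v : Fin n → ℝ | v ∈ Submodule.span ℝ (Set.range b) ∧ ∀ i, ∃ m : ℤ, v i = (m : ℝ)} =
        (Submodule.span ℤ (Set.range b) : Set (Fin n → ℝ)) ∧
      closure {p : Fin n → AddCircle (1 : ℝ) |
          ∃ t : ℝ, p = fun i => ((t * ω i : ℝ) : AddCircle (1 : ℝ))} =
        (fun v : Fin n → ℝ => fun i => ((v i : ℝ) : AddCircle (1 : ℝ))) ''
          (Submodule.span ℝ (Set.range b) : Set (Fin n → ℝ)) := by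
  obtain ⟨m, hm, hωm⟩ := exists_integerLattice_mem_span ω
  have hs : range m ⊆ integerLattice (Fin n) := range_subset_iff.2 hm
  have hdim : finrank ℝ (span ℝ (range m)) = finrank ℚ (span ℚ (range ω)) :=
    le_antisymm ((finrank_range_le_card m).trans_eq (Fintype.card_fin _))
      (finrank_span_rat_le_finrank_span hs hωm)
  obtain ⟨b, hb, hb_ind, hb_span, hb_lat⟩ :=
    exists_integral_basis_span hs ((Fintype.card_fin _).trans hdim.symm)
  rw [← hb_span] at hωm
  obtain ⟨α, hα⟩ := (mem_span_range_iff_exists_fun ℝ).1 hωm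
  have hα_ind : LinearIndependent ℚ α := by
    have : FiniteDimensional ℚ (span ℚ (range α)) := .span_of_finite ℚ (finite_range α)
    refine linearIndependent_iff_card_eq_finrank_span.2 (le_antisymm ?_ (finrank_range_le_card α))
    rw [Fintype.card_fin]
    exact finrank_mono (span_rat_range_le_of_sum_smul_eq hb hα)
  refine ⟨b, fun j => mem_integerLattice_iff.1 (hb j), hb_ind, hωm, ?_, ?_⟩
  · ext v
    simp [hb_lat, hb_span, mem_integerLattice_iff]
  · have h := closure_range_torusProj_smul hb hα_ind
    rw [hα] at h
    convert h using 2
    · ext p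
      exact exists_congr fun t => eq_comm
    · rfl

/-- For nonzero ω ∈ ℝⁿ, the closure of the image of the line ℝω in ℝⁿ/ℤⁿ is the image of
a rational linear subspace V (spanned by integer vectors b₁,…,b_k) containing ω, of
dimension k = dim_ℚ(ℚω₁ + ⋯ + ℚωₙ); moreover V ∩ ℤⁿ is the rank-k lattice spanned by the bᵢ. -/
theorem closure_line_in_n_torus (n : ℕ) (ω : Fin n → ℝ) (hω : ω ≠ 0) :
    ∃ b : Fin (Module.finrank ℚ (Submodule.span ℚ (Set.range ω))) → (Fin n → ℝ),
      (∀ j i, ∃ m : ℤ, b j i = (m : ℝ)) ∧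
      LinearIndependent ℝ b ∧
      ω ∈ Submodule.span ℝ (Set.range b) ∧
      {v : Fin n → ℝ | v ∈ Submodule.span ℝ (Set.range b) ∧ ∀ i, ∃ m : ℤ, v i = (m : ℝ)} =
        (Submodule.span ℤ (Set.range b) : Set (Fin n → ℝ)) ∧
      closure {p : Fin n → AddCircle (1 : ℝ) |
          ∃ t : ℝ, p = fun i => ((t * ω i : ℝ) : AddCircle (1 : ℝ))} =
        (fun v : Fin n → ℝ => fun i => ((v i : ℝ) : AddCircle (1 : ℝ))) ''
          (Submodule.span ℝ (Set.range b) : Set (Fin n → ℝ)) :=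
  closure_line_in_n_torus_general n ω
end

section
/- For any lattice Γ = ℤv₁ + ⋯ + ℤvₙ in ℝⁿ (v₁,…,vₙ a basis of ℝⁿ) and any line L ⊂ ℝⁿ, there exists a linear subspace V ≤ ℝⁿ and a point p such that the closure of the image of L in ℝⁿ/Γ equals the image of p + V. -/
/-!
Let `π : ℝⁿ → ℝⁿ/Γ` and let `H = π⁻¹ (closure (π (ℝω)))`, a closed subgroup containing `Γ` and
`ℝω`. Let `V` be the largest linear subspace inside `H`. For a complement `W` of `V`, the closed
subgroup `H ∩ W` contains no line, hence is discrete (compactness of the unit sphere). The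
projection of `Γ` to `W` lies in `H ∩ W`, so it is closed, and therefore `V + Γ` is closed, i.e.
`π V` is closed. Since `ℝω ⊆ V ⊆ H`, this gives `closure (π (ℝω)) = π V`; translate by `p₀`.
-/

open Filter Topology Pointwise

theorem abs_floor_div_mul_sub_le (t : ℝ) {c : ℝ} (hc : 0 < c) : |⌊t / c⌋ * c - t| ≤ c := by
  have h₁ : (⌊t / c⌋ : ℝ) * c ≤ t := by
    simpa only [le_div_iff₀ hc] using Int.floor_le (t / c)
  have h₂ : t < (⌊t / c⌋ + 1) * c := by
    simpa only [div_lt_iff₀ hc] using Int.lt_floor_add_one (t / c)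
  rw [abs_le]
  constructor <;> nlinarith

theorem tendsto_floor_div_mul {ι : Type*} {l : Filter ι} {c : ι → ℝ} (hc : ∀ k, 0 < c k)
    (h0 : Tendsto c l (𝓝 0)) (t : ℝ) : Tendsto (fun k => (⌊t / c k⌋ : ℝ) * c k) l (𝓝 t) := by
  have h : Tendsto (fun k => (⌊t / c k⌋ : ℝ) * c k - t) l (𝓝 0) :=
    squeeze_zero_norm (fun k => (abs_floor_div_mul_sub_le t (hc k)).trans (le_abs_self _))
      (by simpa using h0.norm)
  simpa using h.add_const t

namespace AddSubgroup

section Lineality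

variable (R : Type*) {E : Type*} [Ring R] [AddCommGroup E] [Module R E]

def linealitySpace (K : AddSubgroup E) : Submodule R E where
  carrier := {v | ∀ t : R, t • v ∈ K}
  add_mem' hv hw t := by simpa only [smul_add] using K.add_mem (hv t) (hw t)
  zero_mem' t := by simpa only [smul_zero] using K.zero_mem
  smul_mem' c _ hv t := by simpa only [smul_smul] using hv (t * c)

variable {R} {K : AddSubgroup E}

theorem linealitySpace_le : (K.linealitySpace R).toAddSubgroup ≤ K := fun v hv => by
  simpa only [one_smul] using hv 1

theorem le_linealitySpace {L : Submodule R E} (h : L.toAddSubgroup ≤ K) :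
    L ≤ K.linealitySpace R := fun _ hv t => h (L.smul_mem t hv)

end Lineality

section Normed

variable {E : Type*} [NormedAddCommGroup E] [NormedSpace ℝ E]

/-- The multiples `⌊t / ‖x k‖⌋ • x k ∈ K` tend to `t • v`. -/
theorem mem_linealitySpace_of_tendsto {K : AddSubgroup E} (hK : IsClosed (K : Set E))
    {ι : Type*} {l : Filter ι} [l.NeBot] {x : ι → E} (hxK : ∀ k, x k ∈ K) (hx0 : ∀ k, x k ≠ 0)
    (hx : Tendsto x l (𝓝 0)) {v : E} (hv : Tendsto (fun k => ‖x k‖⁻¹ • x k) l (𝓝 v)) :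
    v ∈ K.linealitySpace ℝ := by
  intro t
  have hnorm : ∀ k, 0 < ‖x k‖ := fun k => norm_pos_iff.2 (hx0 k)
  have hmul : ∀ k, (⌊t / ‖x k‖⌋ • x k : E) =
      ((⌊t / ‖x k‖⌋ : ℝ) * ‖x k‖) • (‖x k‖⁻¹ • x k) := by
    intro k
    rw [smul_smul, mul_assoc, mul_inv_cancel₀ (hnorm k).ne', mul_one, Int.cast_smul_eq_zsmul]
  have hlim : Tendsto (fun k => (⌊t / ‖x k‖⌋ • x k : E)) l (𝓝 (t • v)) := by
    simp only [hmul]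
    exact (tendsto_floor_div_mul hnorm (by simpa using hx.norm) t).smul hv
  exact hK.mem_of_tendsto hlim (Eventually.of_forall fun k => K.zsmul_mem (hxK k) _)

variable [FiniteDimensional ℝ E]

theorem discreteTopology_of_linealitySpace_eq_bot {K : AddSubgroup E} (hK : IsClosed (K : Set E))
    (hlin : K.linealitySpace ℝ = ⊥) : DiscreteTopology K := by
  by_contra hdisc
  have hsmall : ∀ k : ℕ, ∃ x ∈ K, x ≠ 0 ∧ ‖x‖ < 1 / (k + 1) := by
    intro k
    by_contra! h
    exact hdisc (DiscreteTopology.of_forall_le_norm (r := 1 / (k + 1)) (by positivity)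
      fun x hx => h x x.2 (by simpa using hx))
  choose x hxK hx0 hxsmall using hsmall
  have hx : Tendsto x atTop (𝓝 0) :=
    squeeze_zero_norm (fun k => (hxsmall k).le) tendsto_one_div_add_atTop_nhds_zero_nat
  obtain ⟨v, hv, φ, hφ, hconv⟩ := (isCompact_sphere (0 : E) 1).tendsto_subseq
    (x := fun k => ‖x k‖⁻¹ • x k) fun k => by simp [norm_smul, hx0 k]
  have hvK := mem_linealitySpace_of_tendsto hK (fun k => hxK (φ k)) (fun k => hx0 (φ k))
    (hx.comp hφ.tendsto_atTop) hconv
  rw [hlin, Submodule.mem_bot] at hvK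
  simp [hvK] at hv

/-- With `q` the projection onto a complement `W` of `V = H.linealitySpace ℝ` along `V`, the
subgroup `q Γ` lies in the discrete subgroup `H ∩ W`, so it is closed, and `V + Γ = q⁻¹ (q Γ)`. -/
theorem isClosed_linealitySpace_sup {H Γ : AddSubgroup E} (hH : IsClosed (H : Set E))
    (hΓ : Γ ≤ H) :
    IsClosed (((H.linealitySpace ℝ).toAddSubgroup ⊔ Γ : AddSubgroup E) : Set E) := by
  set V := H.linealitySpace ℝ
  obtain ⟨W, hVW⟩ := V.exists_isCompl
  set q := W.projection V hVW.symm
  have hqΓ : (Γ.map q.toAddMonoidHom : Set E) ⊆ H ⊓ W.toAddSubgroup := by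
    rintro _ ⟨γ, hγ, rfl⟩
    refine ⟨?_, W.projection_apply_mem _ γ⟩
    rw [LinearMap.toAddMonoidHom_coe, Submodule.projection_eq_self_sub_projection hVW]
    exact H.sub_mem (hΓ hγ) (linealitySpace_le (V.projection_apply_mem _ γ))
  have hWH : (H ⊓ W.toAddSubgroup).linealitySpace ℝ = ⊥ := by
    refine (Submodule.eq_bot_iff _).2 fun v hv => ?_
    have hvV : v ∈ V := fun t => (hv t).1
    have hvW : v ∈ W := by simpa using (hv 1).2
    exact Submodule.disjoint_def.1 hVW.disjoint v hvV hvW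
  have : DiscreteTopology (Γ.map q.toAddMonoidHom) :=
    (discreteTopology_of_linealitySpace_eq_bot (hH.inter W.closed_of_finiteDimensional)
      hWH).of_subset hqΓ
  have hker : V.toAddSubgroup = q.toAddMonoidHom.ker := by
    rw [← LinearMap.ker_toAddSubgroup, Submodule.ker_projection]
  rw [sup_comm, hker, ← comap_map_eq]
  exact (isClosed_of_discrete (H := Γ.map q.toAddMonoidHom)).preimage
    q.continuous_of_finiteDimensional

end Normed

end AddSubgroup

namespace QuotientAddGroup

variable {E : Type*} [NormedAddCommGroup E] [NormedSpace ℝ E] [FiniteDimensional ℝ E]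

theorem exists_closure_image_mk_submodule_eq (Γ : AddSubgroup E) (L : Submodule ℝ E) :
    ∃ V : Submodule ℝ E, closure (mk' Γ '' L) = mk' Γ '' V := by
  set H := (L.toAddSubgroup.map (mk' Γ)).topologicalClosure.comap (mk' Γ)
  have hH : IsClosed (H : Set E) := isClosed_closure.preimage continuous_quot_mk
  have hΓH : Γ ≤ H := fun γ hγ => by simp [H, (eq_zero_iff γ).2 hγ]
  refine ⟨H.linealitySpace ℝ, subset_antisymm (closure_minimal ?_ ?_) ?_⟩
  · exact Set.image_mono (AddSubgroup.le_linealitySpace fun v hv => subset_closure ⟨v, hv, rfl⟩)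
  · have hsat : mk' Γ ⁻¹' (mk' Γ '' H.linealitySpace ℝ) =
        ((H.linealitySpace ℝ).toAddSubgroup ⊔ Γ : AddSubgroup E) := by
      rw [← Submodule.coe_toAddSubgroup, ← AddSubgroup.coe_map, ← AddSubgroup.coe_comap,
        AddSubgroup.comap_map_eq, ker_mk']
    rw [← (isQuotientMap_mk Γ).isClosed_preimage]
    exact hsat ▸ AddSubgroup.isClosed_linealitySpace_sup hH hΓH
  · exact Set.image_subset_iff.2 fun _ hv => AddSubgroup.linealitySpace_le (K := H) hv

end QuotientAddGroup

theorem closure_line_in_general_torus_general (n : ℕ)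
    (Γ : AddSubgroup (Fin n → ℝ))
    (p₀ ω : Fin n → ℝ) :
    ∃ (V : Submodule ℝ (Fin n → ℝ)) (p : Fin n → ℝ),
      closure ((QuotientAddGroup.mk' Γ) '' {x : Fin n → ℝ | ∃ t : ℝ, x = p₀ + t • ω}) =
        (QuotientAddGroup.mk' Γ) '' {x : Fin n → ℝ | ∃ v ∈ V, x = p + v} := by
  obtain ⟨V, hV⟩ := QuotientAddGroup.exists_closure_image_mk_submodule_eq Γ (ℝ ∙ ω)
  refine ⟨V, p₀, ?_⟩
  have hline :
      {x | ∃ t : ℝ, x = p₀ + t • ω} = p₀ +ᵥ ((ℝ ∙ ω : Submodule ℝ _) : Set (Fin n → ℝ)) := by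
    ext x
    simp [Set.mem_vadd_set, Submodule.mem_span_singleton, eq_comm]
  have hplane : {x | ∃ v ∈ V, x = p₀ + v} = p₀ +ᵥ (V : Set (Fin n → ℝ)) := by
    ext x
    simp [Set.mem_vadd_set, eq_comm]
  rw [hline, hplane, Set.image_vadd_distrib, Set.image_vadd_distrib, closure_vadd, hV]

/-- For any lattice Γ = ℤv₁ + ⋯ + ℤvₙ in ℝⁿ (where the vᵢ form a basis of ℝⁿ) and any
affine line p₀ + ℝω in ℝⁿ, the closure of the image of the line in ℝⁿ/Γ is the image of
some translate p + V of a linear subspace V of ℝⁿ. -/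
theorem closure_line_in_general_torus (n : ℕ) (b : Module.Basis (Fin n) ℝ (Fin n → ℝ))
    (Γ : AddSubgroup (Fin n → ℝ))
    (hΓ : (Γ : Set (Fin n → ℝ)) = (Submodule.span ℤ (Set.range b) : Set (Fin n → ℝ)))
    (p₀ ω : Fin n → ℝ) :
    ∃ (V : Submodule ℝ (Fin n → ℝ)) (p : Fin n → ℝ),
      closure ((QuotientAddGroup.mk' Γ) '' {x : Fin n → ℝ | ∃ t : ℝ, x = p₀ + t • ω}) =
        (QuotientAddGroup.mk' Γ) '' {x : Fin n → ℝ | ∃ v ∈ V, x = p + v} :=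
  closure_line_in_general_torus_general n Γ p₀ ω
end
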